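/- Let A(t) be a differentiable family of positive self-adjoint automorphisms A(t) : V → V of a finite-dimensional inner product space (V, ⟨·,·⟩_g), each defining a second inner product ⟨u,v⟩_h := ⟨A u, v⟩_g, and let D be a linear operator (playing the role of ∇^h − ∇^g) such that A' = A D + D* A. Then ‖(A^{1/2})'‖ ≤ ‖A‖ · ‖A^{-1/2}‖ · ‖D‖. -/

import Mathlib

open ContinuousLinearMap

/-- Cauchy–Schwarz for a positive operator: `⟪T x, y⟫² ≤ ⟪T x, x⟫ ⟪T y, y⟫`. -/
lemma pos_inner_sq_le {E : Type*} [NormedAddCommGroup E] [InnerProductSpace ℝ E]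
    [CompleteSpace E] (T : E →L[ℝ] E) (hT : T.IsPositive) (x y : E) :
    (inner ℝ (T x) y : ℝ) ^ 2 ≤ (inner ℝ (T x) x : ℝ) * (inner ℝ (T y) y : ℝ) := by
  have hsa : ∀ u v : E, (inner ℝ (T u) v : ℝ) = inner ℝ u (T v) := by
    intro u v
    have := hT.isSelfAdjoint
    rw [IsSelfAdjoint, ContinuousLinearMap.star_eq_adjoint] at this
    conv_lhs => rw [← this]
    exact ContinuousLinearMap.adjoint_inner_left T v u
  have hq : ∀ t : ℝ, 0 ≤ (inner ℝ (T y) y : ℝ) * t ^ 2 + (2 * inner ℝ (T x) y) * t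
      + (inner ℝ (T x) x : ℝ) := by
    intro t
    have h0 : 0 ≤ (inner ℝ (T (x + t • y)) (x + t • y) : ℝ) := by
      have := hT.inner_nonneg_right (x + t • y)
      simpa [real_inner_comm] using hT.inner_nonneg_left (x + t • y)
    have hyx : (inner ℝ (T y) x : ℝ) = inner ℝ (T x) y := by
      rw [hsa y x, real_inner_comm]
    have hexp : (inner ℝ (T (x + t • y)) (x + t • y) : ℝ)
        = (inner ℝ (T y) y : ℝ) * t ^ 2 + (2 * inner ℝ (T x) y) * t + (inner ℝ (T x) x : ℝ) := by
      simp [map_add, map_smul, inner_add_add_self, inner_add_left, inner_add_right,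
        inner_smul_left, inner_smul_right, hyx]
      ring
    linarith [hexp ▸ h0]
  have hq' : ∀ t : ℝ, 0 ≤ (inner ℝ (T y) y : ℝ) * (t * t) + (2 * inner ℝ (T x) y) * t
      + (inner ℝ (T x) x : ℝ) := by
    intro t; have := hq t; nlinarith [this]
  have := discrim_le_zero hq'
  rw [discrim] at this
  nlinarith [this]

/-- A self-adjoint operator on a nontrivial finite-dimensional real inner ℝ product space has a
unit eigenvector whose eigenvalue dominates the operator norm. -/
lemma exists_unit_eigenvector_norm_le {E : Type*} [NormedAddCommGroup E]
    [InnerProductSpace ℝ E] [FiniteDimensional ℝ E] [Nontrivial E]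
    (T : E →L[ℝ] E) (hT : IsSelfAdjoint T) :
    ∃ (μ : ℝ) (v : E), ‖v‖ = 1 ∧ T v = μ • v ∧ ‖T‖ ≤ |μ| := by
  have hsym : (T : E →ₗ[ℝ] E).IsSymmetric := hT.isSymmetric
  have hn : Module.finrank ℝ E = Module.finrank ℝ E := rfl
  set n := Module.finrank ℝ E with hndef
  have hpos : 0 < n := Module.finrank_pos
  haveI : Nonempty (Fin n) := ⟨⟨0, hpos⟩⟩
  obtain ⟨i₀, hi₀⟩ := Finite.exists_max (fun i : Fin n => |hsym.eigenvalues hn i|)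
  refine ⟨hsym.eigenvalues hn i₀, hsym.eigenvectorBasis hn i₀, ?_, ?_, ?_⟩
  · exact (hsym.eigenvectorBasis hn).orthonormal.1 i₀
  · exact hsym.apply_eigenvectorBasis hn i₀
  · refine T.opNorm_le_bound (abs_nonneg _) fun x => ?_
    set B := hsym.eigenvectorBasis hn
    have h1 : ‖T x‖ = ‖B.repr (T x)‖ := (B.repr.norm_map (T x)).symm
    have h2 : ‖x‖ = ‖B.repr x‖ := (B.repr.norm_map x).symm
    rw [h1, h2]
    have hrepr : ∀ i, B.repr (T x) i = hsym.eigenvalues hn i * B.repr x i :=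
      fun i => hsym.eigenvectorBasis_apply_self_apply hn x i
    rw [EuclideanSpace.norm_eq, EuclideanSpace.norm_eq]
    rw [← Real.sqrt_sq (by positivity : (0:ℝ) ≤ |hsym.eigenvalues hn i₀|), ← Real.sqrt_mul
      (by positivity)]
    apply Real.sqrt_le_sqrt
    rw [Finset.mul_sum]
    apply Finset.sum_le_sum
    intro i _
    rw [hrepr i]
    have := hi₀ i
    have h0 : (0:ℝ) ≤ ‖B.repr x i‖ ^ 2 := by positivity
    calc ‖hsym.eigenvalues hn i * B.repr x i‖ ^ 2
        = (hsym.eigenvalues hn i) ^ 2 * ‖B.repr x i‖ ^ 2 := by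
          rw [norm_mul, mul_pow]; rw [Real.norm_eq_abs, sq_abs]
      _ ≤ |hsym.eigenvalues hn i₀| ^ 2 * ‖B.repr x i‖ ^ 2 := by
          apply mul_le_mul_of_nonneg_right _ h0
          rw [← sq_abs]
          exact pow_le_pow_left₀ (abs_nonneg _) (hi₀ i) 2

/-- Let `A` be a positive self-adjoint automorphism of a finite-dimensional real inner ℝ product
space, with positive square root `R = A^{1/2}` and positive inverse square root
`Rinv = A^{-1/2}`.  If the derivative `R'` of the square root (a self-adjoint operator,
satisfying the product rule `R' R + R R' = A'`) corresponds to a derivative of the form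
`A' = A D + D* A` for some operator `D`, then `‖(A^{1/2})'‖ ≤ ‖A‖ · ‖A^{-1/2}‖ · ‖D‖`. -/
theorem norm_deriv_sqrt_le
    {E : Type*} [NormedAddCommGroup E] [InnerProductSpace ℝ E] [FiniteDimensional ℝ E]
    (A R R' Rinv D : E →L[ℝ] E)
    (hA : A.IsPositive) (hR : R.IsPositive) (hRinv : Rinv.IsPositive)
    (hRR : R ∘L R = A) (h1 : R ∘L Rinv = 1) (h2 : Rinv ∘L R = 1)
    (hR' : IsSelfAdjoint R')
    (hderiv : R' ∘L R + R ∘L R' = A ∘L D + (ContinuousLinearMap.adjoint D) ∘L A) :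
    ‖R'‖ ≤ ‖A‖ * ‖Rinv‖ * ‖D‖ := by
  rcases subsingleton_or_nontrivial E with hE | hE
  · have : R' = 0 := Subsingleton.elim _ _
    rw [this, norm_zero]
    positivity
  obtain ⟨μ, v, hv1, hvE, hμ⟩ := exists_unit_eigenvector_norm_le R' hR'
  -- self-adjointness transfers
  have hsa : ∀ (T : E →L[ℝ] E), IsSelfAdjoint T → ∀ u w : E,
      (inner ℝ (T u) w : ℝ) = inner ℝ u (T w) := by
    intro T hT u w
    rw [IsSelfAdjoint, ContinuousLinearMap.star_eq_adjoint] at hT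
    conv_lhs => rw [← hT]
    exact ContinuousLinearMap.adjoint_inner_left T w u
  set r : ℝ := inner ℝ (R v) v with hrdef
  have hr0 : (0:ℝ) ≤ r := by
    rw [hrdef]
    simpa using hR.inner_nonneg_left v
  -- key identity: μ * r = ⟪D v, A v⟫
  have hkey : μ * r = (inner ℝ (D v) (A v) : ℝ) := by
    have happ : R' (R v) + R (R' v) = A (D v) + (ContinuousLinearMap.adjoint D) (A v) := by
      have := congrArg (fun T : E →L[ℝ] E => T v) hderiv
      simpa using this
    have hinner := congrArg (fun w => (inner ℝ w v : ℝ)) happ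
    simp only [inner_add_left] at hinner
    have e1 : (inner ℝ (R' (R v)) v : ℝ) = μ * r := by
      rw [hsa R' hR', hvE, real_inner_smul_right, hrdef, real_inner_comm]
    have e2 : (inner ℝ (R (R' v)) v : ℝ) = μ * r := by
      rw [hvE, map_smul, real_inner_smul_left]
    have e3 : (inner ℝ (A (D v)) v : ℝ) = inner ℝ (D v) (A v) := by
      rw [hsa A hA.isSelfAdjoint, real_inner_comm]
    have e4 : (inner ℝ ((ContinuousLinearMap.adjoint D) (A v)) v : ℝ) = inner ℝ (D v) (A v) := by
      rw [ContinuousLinearMap.adjoint_inner_left, real_inner_comm]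
    rw [e1, e2, e3, e4] at hinner
    linarith
  -- lower bound on r
  have hrl : 1 ≤ ‖Rinv‖ * r := by
    have hRiv : R (Rinv v) = v := by
      have := congrArg (fun T : E →L[ℝ] E => T v) h1
      simpa using this
    have hCS := pos_inner_sq_le R hR (Rinv v) v
    rw [hRiv] at hCS
    have hvv : (inner ℝ v v : ℝ) = 1 := by
      rw [real_inner_self_eq_norm_sq, hv1]; norm_num
    rw [hvv] at hCS
    have hb : (inner ℝ v (Rinv v) : ℝ) ≤ ‖Rinv‖ := by
      calc (inner ℝ v (Rinv v) : ℝ) ≤ ‖v‖ * ‖Rinv v‖ := real_inner_le_norm v (Rinv v)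
        _ ≤ ‖v‖ * (‖Rinv‖ * ‖v‖) := by
            exact mul_le_mul_of_nonneg_left (Rinv.le_opNorm v) (norm_nonneg v)
        _ = ‖Rinv‖ := by rw [hv1]; ring
    have hbnn : (0:ℝ) ≤ inner ℝ v (Rinv v) := by
      simpa [real_inner_comm] using hRinv.inner_nonneg_left v
    nlinarith [hCS]
  -- upper bound on |⟪D v, A v⟫|
  have hub : |(inner ℝ (D v) (A v) : ℝ)| ≤ ‖D‖ * ‖A‖ := by
    calc |(inner ℝ (D v) (A v) : ℝ)| ≤ ‖D v‖ * ‖A v‖ := abs_real_inner_le_norm _ _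
      _ ≤ (‖D‖ * ‖v‖) * (‖A‖ * ‖v‖) :=
          mul_le_mul (D.le_opNorm v) (A.le_opNorm v) (norm_nonneg _) (by positivity)
      _ = ‖D‖ * ‖A‖ := by rw [hv1]; ring
  -- conclude
  have habs : |μ| * r ≤ ‖D‖ * ‖A‖ := by
    have : |μ * r| ≤ ‖D‖ * ‖A‖ := hkey ▸ hub
    rwa [abs_mul, abs_of_nonneg hr0] at this
  calc ‖R'‖ ≤ |μ| := hμ
    _ ≤ |μ| * (‖Rinv‖ * r) := le_mul_of_one_le_right (abs_nonneg _) hrl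
    _ = ‖Rinv‖ * (|μ| * r) := by ring
    _ ≤ ‖Rinv‖ * (‖D‖ * ‖A‖) := mul_le_mul_of_nonneg_left habs (norm_nonneg _)
    _ = ‖A‖ * ‖Rinv‖ * ‖D‖ := by ring
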